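/- The completion of the space of finite barcodes for the bottleneck distance is the space of infinite barcodes with the finiteness property: the set of infinite barcodes B such that for every ε > 0 only finitely many intervals of B have length greater than ε, equipped with the bottleneck distance, is a complete extended metric space in which the finite barcodes form a dense subset. -/

import Mathlib

open scoped ENNReal Classical

/-- A bar `(a, b]` with `-∞ ≤ a ≤ b ≤ +∞`, encoded by its pair of endpoints in `EReal`. -/
abbrev Bar : Type := EReal × EReal

/-- The distance `|x - y|` between two extended-real endpoints. -/
noncomputable def erealDist (x y : EReal) : ℝ≥0∞ :=
  if x = y then 0
  else if x = ⊤ ∨ x = ⊥ ∨ y = ⊤ ∨ y = ⊥ then ⊤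
  else ENNReal.ofReal |x.toReal - y.toReal|

/-- `d((a,b], (c,d]) = max (|c - a|) (|d - b|)`. -/
noncomputable def barDist (I J : Bar) : ℝ≥0∞ :=
  max (erealDist I.1 J.1) (erealDist I.2 J.2)

/-- The length of the bar `(a, b]`. -/
noncomputable def barLength (I : Bar) : ℝ≥0∞ := erealDist I.1 I.2

/-- A countable family of intervals (an infinite barcode is the equivalence class of such a
family); trivial intervals serve as padding, so this also encodes finite families. -/
def ValidFam (f : ℕ → Bar) : Prop := ∀ n, (f n).1 ≤ (f n).2

/-- The finiteness property defining the completion: for every positive `ε`, only finitely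
many intervals have length greater than `ε`. -/
def TameFam (f : ℕ → Bar) : Prop :=
  ∀ ε : ℝ≥0∞, 0 < ε → {n : ℕ | ε < barLength (f n)}.Finite

/-- Families with only finitely many nontrivial intervals: these are the finite barcodes. -/
def FiniteFam (f : ℕ → Bar) : Prop := {n : ℕ | (f n).1 < (f n).2}.Finite

/-- Two families represent the same (infinite) barcode if deleting all trivial intervals
yields the same family up to a bijection of the index sets. -/
def EquivFam (f g : ℕ → Bar) : Prop :=
  ∃ e : {n : ℕ // (f n).1 < (f n).2} ≃ {n : ℕ // (g n).1 < (g n).2},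
    ∀ n : {n : ℕ // (f n).1 < (f n).2}, g (e n).val = f n.val

/-- A partial matching between two countable families realizing the bound `ε`. -/
def InfMatching (f g : ℕ → Bar) (ε : ℝ≥0∞) : Prop :=
  ∃ (S T : Set ℕ) (σ : S ≃ T),
    (∀ n : S, barDist (f n.val) (g (σ n).val) ≤ ε) ∧
    (∀ n : ℕ, n ∉ S → barLength (f n) ≤ 2 * ε) ∧
    (∀ n : ℕ, n ∉ T → barLength (g n) ≤ 2 * ε)

/-- The bottleneck distance between two countable families of intervals. -/
noncomputable def dBotInf (f g : ℕ → Bar) : ℝ≥0∞ := sInf {ε : ℝ≥0∞ | InfMatching f g ε}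

/-!
Matchings compose, and the length of a bar moves by at most twice its displacement, so the
bottleneck distance is a pseudometric. In a tame family a long bar `I` has only finitely many long
bars near it, so a fine enough matching sends copies of `I` to copies of `I`: at distance zero the
multiplicities of all nontrivial bars agree. Deleting the bars of length at most `ε` gives density.

For completeness pass to a subsequence with `2⁻¹ ^ k`-matchings between consecutive terms and
follow each bar through the matchings. Along a chain that is never cut the endpoints form Cauchy
sequences; the limits of the chains, one for each stage and bar at which a chain is born, form the
limit. A chain cut at stage `t`, or born at stage `t + 1`, only carries bars of length at most
twice the tail sum from `t` on, and the limit is tame because tame families approximate it.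
-/

open Filter Topology

lemma erealDist_self (x : EReal) : erealDist x x = 0 := by simp [erealDist]

lemma erealDist_comm (x y : EReal) : erealDist x y = erealDist y x := by
  unfold erealDist
  by_cases h : x = y
  · simp [h]
  · simp only [h, Ne.symm h, if_false, abs_sub_comm]
    congr 1
    exact propext (by tauto)

lemma erealDist_coe_coe (a b : ℝ) : erealDist a b = edist a b := by
  rw [edist_dist, Real.dist_eq]
  by_cases h : a = b
  · simp [h, erealDist]
  · simp [erealDist, h]

lemma eq_or_exists_coe_of_erealDist_ne_top {x y : EReal} (h : erealDist x y ≠ ⊤) :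
    x = y ∨ ∃ a b : ℝ, x = a ∧ y = b := by
  unfold erealDist at h
  split_ifs at h with hxy hinf
  · exact Or.inl hxy
  · exact absurd rfl h
  · simp only [not_or] at hinf
    exact Or.inr ⟨x.toReal, y.toReal, (EReal.coe_toReal hinf.1 hinf.2.1).symm,
      (EReal.coe_toReal hinf.2.2.1 hinf.2.2.2).symm⟩

lemma erealDist_triangle (x y z : EReal) : erealDist x z ≤ erealDist x y + erealDist y z := by
  rcases eq_or_ne (erealDist x y) ⊤ with hxy | hxy
  · simp [hxy]
  rcases eq_or_ne (erealDist y z) ⊤ with hyz | hyz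
  · simp [hyz]
  rcases eq_or_exists_coe_of_erealDist_ne_top hxy with rfl | ⟨a, b, rfl, rfl⟩
  · simp [erealDist_self]
  rcases eq_or_exists_coe_of_erealDist_ne_top hyz with h | ⟨b', c, hb, rfl⟩
  · simp [h, erealDist_self]
  obtain rfl := EReal.coe_injective hb
  simpa only [erealDist_coe_coe] using edist_triangle a b c

lemma erealDist_eq_zero {x y : EReal} : erealDist x y = 0 ↔ x = y := by
  refine ⟨fun h => ?_, fun h => h ▸ erealDist_self x⟩
  rcases eq_or_exists_coe_of_erealDist_ne_top (h ▸ ENNReal.zero_ne_top) with hxy | ⟨a, b, rfl, rfl⟩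
  · exact hxy
  · rw [erealDist_coe_coe, edist_eq_zero] at h
    rw [h]

lemma exists_tendsto_erealDist_le_tsum {x : ℕ → EReal} (d : ℕ → ℝ≥0∞) (hd : ∑' n, d n ≠ ⊤)
    (hx : ∀ n, erealDist (x n) (x (n + 1)) ≤ d n) :
    ∃ L, Tendsto x atTop (𝓝 L) ∧ ∀ n, erealDist (x n) L ≤ ∑' m, d (n + m) := by
  have hfin : ∀ n, erealDist (x n) (x (n + 1)) ≠ ⊤ :=
    fun n => ne_top_of_le_ne_top hd ((hx n).trans (ENNReal.le_tsum n))
  by_cases hreal : ∃ a : ℝ, x 0 = a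
  · have hcoe : ∀ n, ∃ a : ℝ, x n = a := by
      intro n
      induction n with
      | zero => exact hreal
      | succ n ih =>
        obtain ⟨a, ha⟩ := ih
        rcases eq_or_exists_coe_of_erealDist_ne_top (hfin n) with h | ⟨_, b, _, hb⟩
        · exact ⟨a, h ▸ ha⟩
        · exact ⟨b, hb⟩
    choose y hy using hcoe
    have hyd : ∀ n, edist (y n) (y (n + 1)) ≤ d n := fun n => by
      simpa only [hy, erealDist_coe_coe] using hx n
    obtain ⟨a, ha⟩ := cauchySeq_tendsto_of_complete (cauchySeq_of_edist_le_of_tsum_ne_top d hyd hd)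
    refine ⟨a, ?_, fun n => ?_⟩
    · rw [funext hy]; exact (continuous_coe_real_ereal.tendsto a).comp ha
    · simpa only [hy, erealDist_coe_coe] using edist_le_tsum_of_edist_le_of_tendsto d hyd ha n
  · have hconst : ∀ n, x n = x 0 := by
      intro n
      induction n with
      | zero => rfl
      | succ n ih =>
        rcases eq_or_exists_coe_of_erealDist_ne_top (hfin n) with h | ⟨a, _, ha, _⟩
        · rw [← h, ih]
        · exact absurd ⟨a, ih ▸ ha⟩ hreal
    refine ⟨x 0, ?_, fun n => by simp [hconst n, erealDist_self]⟩
    rw [funext hconst]; exact tendsto_const_nhds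

lemma barDist_self (I : Bar) : barDist I I = 0 := by simp [barDist, erealDist_self]

lemma barDist_comm (I J : Bar) : barDist I J = barDist J I := by
  simp [barDist, erealDist_comm I.1, erealDist_comm I.2]

lemma barDist_triangle (I J K : Bar) : barDist I K ≤ barDist I J + barDist J K :=
  max_le ((erealDist_triangle _ _ _).trans (add_le_add (le_max_left _ _) (le_max_left _ _)))
    ((erealDist_triangle _ _ _).trans (add_le_add (le_max_right _ _) (le_max_right _ _)))

lemma barDist_eq_zero {I J : Bar} : barDist I J = 0 ↔ I = J := by
  simp [barDist, erealDist_eq_zero, Prod.ext_iff]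

lemma barLength_pos {I : Bar} (h : I.1 < I.2) : 0 < barLength I :=
  pos_iff_ne_zero.2 fun h0 => h.ne (erealDist_eq_zero.1 h0)

lemma barLength_le_add (I J : Bar) : barLength I ≤ barLength J + 2 * barDist I J :=
  calc barLength I ≤ erealDist I.1 J.1 + (erealDist J.1 J.2 + erealDist J.2 I.2) :=
        (erealDist_triangle _ J.1 _).trans (add_le_add_right (erealDist_triangle _ J.2 _) _)
    _ ≤ barDist I J + (barLength J + barDist I J) := by
        gcongr
        · exact le_max_left _ _
        · exact le_refl _
        · rw [erealDist_comm]; exact le_max_right _ _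
    _ = barLength J + 2 * barDist I J := by ring

lemma exists_bar_limit {x : ℕ → Bar} (hx : ∀ n, (x n).1 ≤ (x n).2) (d : ℕ → ℝ≥0∞)
    (hd : ∑' n, d n ≠ ⊤) (hxd : ∀ n, barDist (x n) (x (n + 1)) ≤ d n) :
    ∃ L : Bar, L.1 ≤ L.2 ∧ ∀ n, barDist (x n) L ≤ ∑' m, d (n + m) := by
  obtain ⟨a, ha, had⟩ := exists_tendsto_erealDist_le_tsum (x := fun n => (x n).1) d hd
    fun n => (le_max_left _ _).trans (hxd n)
  obtain ⟨b, hb, hbd⟩ := exists_tendsto_erealDist_le_tsum (x := fun n => (x n).2) d hd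
    fun n => (le_max_right _ _).trans (hxd n)
  exact ⟨(a, b), le_of_tendsto_of_tendsto' ha hb hx, fun n => max_le (had n) (hbd n)⟩

section Matching

variable {f g h : ℕ → Bar} {ε ε' : ℝ≥0∞}

lemma infMatching_refl (f : ℕ → Bar) : InfMatching f f 0 :=
  ⟨Set.univ, Set.univ, Equiv.refl _, fun n => by simp [barDist_self],
    fun n hn => absurd (Set.mem_univ n) hn, fun n hn => absurd (Set.mem_univ n) hn⟩

lemma InfMatching.mono (M : InfMatching f g ε) (hε : ε ≤ ε') : InfMatching f g ε' := by
  obtain ⟨S, T, σ, h1, h2, h3⟩ := M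
  exact ⟨S, T, σ, fun n => (h1 n).trans hε, fun n hn => (h2 n hn).trans (by gcongr),
    fun n hn => (h3 n hn).trans (by gcongr)⟩

lemma InfMatching.symm (M : InfMatching f g ε) : InfMatching g f ε := by
  obtain ⟨S, T, σ, h1, h2, h3⟩ := M
  refine ⟨T, S, σ.symm, fun m => ?_, h3, h2⟩
  simpa [barDist_comm] using h1 (σ.symm m)

lemma InfMatching.exists_bijOn (M : InfMatching f g ε) :
    ∃ (S T : Set ℕ) (F : ℕ → ℕ), Set.BijOn F S T ∧
      (∀ n ∈ S, barDist (f n) (g (F n)) ≤ ε) ∧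
      (∀ n, n ∉ S → barLength (f n) ≤ 2 * ε) ∧
      (∀ m, m ∉ T → barLength (g m) ≤ 2 * ε) := by
  obtain ⟨S, T, σ, h1, h2, h3⟩ := M
  refine ⟨S, T, fun n => if hn : n ∈ S then σ ⟨n, hn⟩ else n, ⟨?_, ?_, ?_⟩,
    fun n hn => by simpa [hn] using h1 ⟨n, hn⟩, h2, h3⟩
  · intro n hn
    simp [hn]
  · intro a ha b hb hab
    simpa [ha, hb, Subtype.ext_iff] using σ.injective (Subtype.ext (by simpa [ha, hb] using hab))
  · intro m hm
    exact ⟨σ.symm ⟨m, hm⟩, (σ.symm ⟨m, hm⟩).2, by simp⟩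

lemma infMatching_of_injOn (S : Set ℕ) (F : ℕ → ℕ) (hF : Set.InjOn F S)
    (h1 : ∀ n ∈ S, barDist (f n) (g (F n)) ≤ ε) (h2 : ∀ n, n ∉ S → barLength (f n) ≤ 2 * ε)
    (h3 : ∀ m, m ∉ F '' S → barLength (g m) ≤ 2 * ε) : InfMatching f g ε :=
  ⟨S, F '' S, hF.bijOn_image.equiv F, fun n => h1 n n.2, h2, h3⟩

lemma InfMatching.trans (M₁ : InfMatching f g ε) (M₂ : InfMatching g h ε') :
    InfMatching f h (ε + ε') := by
  obtain ⟨S₁, T₁, F₁, hF₁, hd₁, hS₁, hT₁⟩ := M₁.exists_bijOn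
  obtain ⟨S₂, T₂, F₂, hF₂, hd₂, hS₂, hT₂⟩ := M₂.exists_bijOn
  refine infMatching_of_injOn (S₁ ∩ F₁ ⁻¹' S₂) (F₂ ∘ F₁)
    (fun a ha b hb hab => hF₁.injOn ha.1 hb.1 (hF₂.injOn ha.2 hb.2 hab))
    (fun n hn => (barDist_triangle _ _ _).trans (add_le_add (hd₁ n hn.1) (hd₂ _ hn.2)))
    (fun n hn => ?_) (fun m hm => ?_)
  · by_cases hn₁ : n ∈ S₁
    · calc barLength (f n) ≤ barLength (g (F₁ n)) + 2 * barDist (f n) (g (F₁ n)) :=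
            barLength_le_add _ _
        _ ≤ 2 * ε' + 2 * ε := add_le_add (hS₂ _ fun h => hn ⟨hn₁, h⟩) (by gcongr; exact hd₁ n hn₁)
        _ = 2 * (ε + ε') := by ring
    · exact (hS₁ n hn₁).trans (by gcongr; exact le_self_add)
  · by_cases hm₂ : m ∈ T₂
    · obtain ⟨z, hz, rfl⟩ := hF₂.surjOn hm₂
      have hz₁ : z ∉ T₁ := by
        rintro hz₁
        obtain ⟨w, hw, rfl⟩ := hF₁.surjOn hz₁
        exact hm ⟨w, ⟨hw, hz⟩, rfl⟩
      calc barLength (h (F₂ z)) ≤ barLength (g z) + 2 * barDist (h (F₂ z)) (g z) :=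
            barLength_le_add _ _
        _ ≤ 2 * ε + 2 * ε' := add_le_add (hT₁ z hz₁) (by rw [barDist_comm]; gcongr; exact hd₂ z hz)
        _ = 2 * (ε + ε') := by ring
    · exact (hT₂ m hm₂).trans (by gcongr; exact le_add_self)

lemma dBotInf_le (M : InfMatching f g ε) : dBotInf f g ≤ ε := sInf_le M

lemma InfMatching.of_dBotInf_lt (h : dBotInf f g < ε) : InfMatching f g ε := by
  obtain ⟨ε', M, hε'⟩ := sInf_lt_iff.1 h
  exact M.mono hε'.le

lemma dBotInf_self (f : ℕ → Bar) : dBotInf f f = 0 :=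
  le_antisymm (dBotInf_le (infMatching_refl f)) bot_le

lemma dBotInf_comm (f g : ℕ → Bar) : dBotInf f g = dBotInf g f := by
  simp only [dBotInf]
  congr 1
  ext ε
  exact ⟨InfMatching.symm, InfMatching.symm⟩

lemma dBotInf_triangle (f g h : ℕ → Bar) : dBotInf f h ≤ dBotInf f g + dBotInf g h := by
  simp only [dBotInf, ENNReal.sInf_add, ENNReal.add_sInf]
  exact le_iInf₂ fun ε₂ M₂ => le_iInf₂ fun ε₁ M₁ => dBotInf_le (M₁.trans M₂)

end Matching

lemma TameFam.of_forall_infMatching {f : ℕ → Bar}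
    (h : ∀ η, 0 < η → ∃ g, TameFam g ∧ InfMatching f g η) : TameFam f := by
  intro ε hε
  obtain ⟨g, hg, M⟩ := h (ε / 2 / 2) (ENNReal.half_pos (ENNReal.half_pos hε.ne').ne')
  obtain ⟨S, T, F, hF, h1, h2, -⟩ := M.exists_bijOn
  have hη : 2 * (ε / 2 / 2) = ε / 2 := by rw [two_mul, ENNReal.add_halves]
  have hlong : ∀ n, ε < barLength (f n) → n ∈ S ∧ ε / 2 < barLength (g (F n)) := by
    intro n hn
    have hS : n ∈ S := by
      by_contra hS
      exact ((h2 n hS).trans (hη.le.trans ENNReal.half_le_self)).not_gt hn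
    refine ⟨hS, lt_of_not_ge fun hle => hn.not_ge ?_⟩
    calc barLength (f n) ≤ barLength (g (F n)) + 2 * barDist (f n) (g (F n)) :=
          barLength_le_add _ _
      _ ≤ ε / 2 + ε / 2 := add_le_add hle ((mul_le_mul_right (h1 n hS) 2).trans hη.le)
      _ = ε := ENNReal.add_halves ε
  refine Set.Finite.of_finite_image ((hg _ (ENNReal.half_pos hε.ne')).subset ?_)
    (hF.injOn.mono fun n hn => (hlong n hn).1)
  rintro _ ⟨n, hn, rfl⟩
  exact (hlong n hn).2

lemma TameFam.exists_finiteFam_infMatching {f : ℕ → Bar} (hv : ValidFam f) (ht : TameFam f)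
    {ε : ℝ≥0∞} (hε : 0 < ε) : ∃ g, ValidFam g ∧ FiniteFam g ∧ InfMatching f g ε := by
  set S := {n | ε < barLength (f n)}
  refine ⟨fun n => if n ∈ S then f n else (0, 0), fun n => ?_, (ht ε hε).subset fun n hn => ?_,
    infMatching_of_injOn S id (Set.injOn_id S) (fun n hn => by simp [hn, barDist_self])
      (fun n hn => ?_) (fun m hm => ?_)⟩
  · by_cases hn : n ∈ S <;> simp [hn, hv n]
  · by_contra h
    change n ∉ S at h
    simp [h] at hn
  · exact (not_lt.1 hn).trans (le_mul_of_one_le_left bot_le one_le_two)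
  · have hm : m ∉ S := by simpa using hm
    simp [hm, barLength, erealDist_self]

lemma TameFam.finite_fiber {g : ℕ → Bar} (hg : TameFam g) {I : Bar} (hI : 0 < barLength I) :
    {n | g n = I}.Finite := by
  obtain ⟨ℓ, hℓ0, hℓI⟩ := exists_between hI
  exact (hg ℓ hℓ0).subset fun n (hn : g n = I) => show ℓ < barLength (g n) from hn ▸ hℓI

lemma TameFam.eventually_lt_barDist {g : ℕ → Bar} (hg : TameFam g) (I : Bar) {ℓ : ℝ≥0∞}
    (hℓ : 0 < ℓ) : ∀ᶠ η in 𝓝[>] 0, ∀ m, ℓ < barLength (g m) → g m ≠ I → η < barDist I (g m) := by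
  have hD : {m | ℓ < barLength (g m) ∧ g m ≠ I}.Finite := (hg ℓ hℓ).subset fun m hm => hm.1
  filter_upwards [hD.eventually_all.2 fun m hm => nhdsWithin_le_nhds
    (eventually_lt_nhds (pos_iff_ne_zero.2 (mt barDist_eq_zero.1 (Ne.symm hm.2))))]
    with η hη m h1 h2 using hη m ⟨h1, h2⟩

/-- A fine enough matching sends the copies of `I` in `f` injectively to copies of `I` in `g`. -/
lemma ncard_fiber_le_of_forall_infMatching {f g : ℕ → Bar} (hg : TameFam g)
    (hM : ∀ η, 0 < η → InfMatching f g η) {I : Bar} (hI : 0 < barLength I) :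
    {n | f n = I}.ncard ≤ {n | g n = I}.ncard := by
  obtain ⟨ℓ, hℓ0, hℓI⟩ := exists_between hI
  have hsmall : ∀ᶠ η in 𝓝[>] 0, ℓ + 2 * η < barLength I := by
    have hc : Continuous fun η : ℝ≥0∞ => ℓ + 2 * η :=
      continuous_const.add (ENNReal.continuous_const_mul ENNReal.ofNat_ne_top)
    have : Tendsto (fun η : ℝ≥0∞ => ℓ + 2 * η) (𝓝[>] 0) (𝓝 ℓ) := by
      simpa using (hc.tendsto 0).mono_left nhdsWithin_le_nhds
    exact this.eventually (gt_mem_nhds hℓI)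
  obtain ⟨η, hη0, hηℓ, hηI⟩ :=
    (eventually_mem_nhdsWithin.and (hsmall.and (hg.eventually_lt_barDist I hℓ0))).exists
  obtain ⟨S, T, F, hF, h1, h2, -⟩ := (hM η hη0).exists_bijOn
  have hS : ∀ n, f n = I → n ∈ S := fun n hn => by
    by_contra hS
    exact (h2 n hS).not_gt (hn ▸ le_add_self.trans_lt hηℓ)
  refine Set.ncard_le_ncard_of_injOn F (fun n hn => ?_) (hF.injOn.mono fun n hn => hS n hn)
    (hg.finite_fiber hI)
  have hn : f n = I := hn
  have hdist : barDist I (g (F n)) ≤ η := hn ▸ h1 n (hS n hn)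
  have hlong : ℓ < barLength (g (F n)) := lt_of_not_ge fun hle => hηℓ.not_ge <|
    (barLength_le_add I (g (F n))).trans (by gcongr)
  by_contra hne
  exact (hηI (F n) hlong hne).not_ge hdist

lemma equivFam_of_ncard_fiber_eq {f g : ℕ → Bar} (hf : TameFam f) (hg : TameFam g)
    (h : ∀ I : Bar, 0 < barLength I → {n | f n = I}.ncard = {n | g n = I}.ncard) :
    EquivFam f g := by
  have fiber : ∀ I : Bar, Nonempty ({a : {n // (f n).1 < (f n).2} // f a = I} ≃
      {b : {n // (g n).1 < (g n).2} // g b = I}) := by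
    intro I
    by_cases hI : I.1 < I.2
    · have := (hf.finite_fiber (barLength_pos hI)).to_subtype
      have := (hg.finite_fiber (barLength_pos hI)).to_subtype
      obtain ⟨e⟩ : Nonempty (↥{n | f n = I} ≃ ↥{n | g n = I}) := Finite.card_eq.1 (by
        rw [Nat.card_coe_set_eq, Nat.card_coe_set_eq]; exact h I (barLength_pos hI))
      exact ⟨(Equiv.subtypeSubtypeEquivSubtype fun hn => hn ▸ hI).trans
        (e.trans (Equiv.subtypeSubtypeEquivSubtype fun hn => hn ▸ hI).symm)⟩
    · have : IsEmpty {a : {n // (f n).1 < (f n).2} // f a = I} := ⟨fun a => hI (a.2 ▸ a.1.2)⟩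
      have : IsEmpty {b : {n // (g n).1 < (g n).2} // g b = I} := ⟨fun b => hI (b.2 ▸ b.1.2)⟩
      exact ⟨Equiv.equivOfIsEmpty _ _⟩
  let e := fun I => (fiber I).some
  exact ⟨Equiv.ofFiberEquiv e, Equiv.ofFiberEquiv_map e⟩

lemma equivFam_of_dBotInf_eq_zero {f g : ℕ → Bar} (hf : TameFam f) (hg : TameFam g)
    (h : dBotInf f g = 0) : EquivFam f g := by
  have hM : ∀ η, 0 < η → InfMatching f g η := fun η hη => .of_dBotInf_lt (h ▸ hη)
  exact equivFam_of_ncard_fiber_eq hf hg fun I hI =>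
    le_antisymm (ncard_fiber_le_of_forall_infMatching hg hM hI)
      (ncard_fiber_le_of_forall_infMatching hf (fun η hη => (hM η hη).symm) hI)

section Chain

variable {α : Type*} {S T : ℕ → Set α} {F : ℕ → α → α} {j k : ℕ} {a b : α}

/-- `chain F j a t` is the image of `a` under `F (t - 1) ∘ ⋯ ∘ F j`; it is `a` for `t ≤ j`. -/
def chain (F : ℕ → α → α) (j : ℕ) (a : α) : ℕ → α
  | 0 => a
  | t + 1 => if j ≤ t then F t (chain F j a t) else a

lemma chain_of_le {t : ℕ} (ht : t ≤ j) : chain F j a t = a := by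
  induction t with
  | zero => rfl
  | succ t ih => simp [chain, show ¬ j ≤ t by omega]

lemma chain_self : chain F j a j = a := chain_of_le le_rfl

lemma chain_succ {t : ℕ} (ht : j ≤ t) : chain F j a (t + 1) = F t (chain F j a t) := if_pos ht

lemma chain_chain (hjk : j ≤ k) {t : ℕ} (hkt : k ≤ t) :
    chain F k (chain F j a k) t = chain F j a t := by
  induction t, hkt using Nat.le_induction with
  | base => exact chain_self
  | succ t hkt ih => rw [chain_succ hkt, chain_succ (hjk.trans hkt), ih]

/-- No chain from an earlier time arrives at `a` at time `j`: `a` is not in the image `T (j - 1)`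
of the previous step (vacuous for `j = 0`). -/
def IsBorn (T : ℕ → Set α) (j : ℕ) (a : α) : Prop := ∀ t, j = t + 1 → a ∉ T t

def Survives (S : ℕ → Set α) (F : ℕ → α → α) (j : ℕ) (a : α) : Prop :=
  ∀ t, j ≤ t → chain F j a t ∈ S t

lemma Survives.of_chain (hjk : j ≤ k) (hS : ∀ t ∈ Set.Ico j k, chain F j a t ∈ S t)
    (h : Survives S F k (chain F j a k)) : Survives S F j a := fun t hjt => by
  rcases lt_or_ge t k with htk | hkt
  · exact hS t ⟨hjt, htk⟩
  · rw [← chain_chain hjk hkt]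
    exact h t hkt

lemma exists_first_notMem_of_not_survives (h : ¬ Survives S F k a) :
    ∃ t, k ≤ t ∧ chain F k a t ∉ S t ∧ ∀ s ∈ Set.Ico k t, chain F k a s ∈ S s := by
  have hex : ∃ t, k ≤ t ∧ chain F k a t ∉ S t := by simpa [Survives] using h
  refine ⟨Nat.find hex, (Nat.find_spec hex).1, (Nat.find_spec hex).2, fun s hs => ?_⟩
  by_contra hs'
  exact Nat.find_min hex hs.2 ⟨hs.1, hs'⟩

lemma exists_isBorn_chain_eq (hF : ∀ t, Set.SurjOn (F t) (S t) (T t)) (k : ℕ) (a : α) :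
    ∃ j ≤ k, ∃ b, IsBorn T j b ∧ chain F j b k = a ∧ ∀ t ∈ Set.Ico j k, chain F j b t ∈ S t := by
  induction k generalizing a with
  | zero => exact ⟨0, le_rfl, a, fun t h => by omega, rfl, fun t ht => absurd ht.2 (by omega)⟩
  | succ k ih =>
    by_cases ha : a ∈ T k
    · obtain ⟨c, hc, rfl⟩ := hF k ha
      obtain ⟨j, hj, b, hb, hbc, hS⟩ := ih c
      refine ⟨j, hj.trans k.le_succ, b, hb, by rw [chain_succ hj, hbc], fun t ht => ?_⟩
      rcases (Nat.lt_succ_iff.1 ht.2).lt_or_eq with htk | rfl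
      · exact hS t ⟨ht.1, htk⟩
      · exact hbc ▸ hc
    · refine ⟨k + 1, le_rfl, a, fun t ht => ?_, chain_self, fun t ht => absurd ht.2 (not_lt.2 ht.1)⟩
      obtain rfl : k = t := by omega
      exact ha

lemma chain_succ_ne_of_isBorn (hF : ∀ t, Set.MapsTo (F t) (S t) (T t)) (hb : IsBorn T (k + 1) b)
    (hj : j ≤ k) (hS : chain F j a k ∈ S k) : chain F j a (k + 1) ≠ b := by
  rw [chain_succ hj]
  exact fun h => hb k rfl (h ▸ hF k hS)

lemma isBorn_chain_injective (hmaps : ∀ t, Set.MapsTo (F t) (S t) (T t))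
    (hinj : ∀ t, Set.InjOn (F t) (S t)) {k j j' : ℕ} {a a' : α} (hb : IsBorn T j a)
    (hb' : IsBorn T j' a') (hj : j ≤ k) (hj' : j' ≤ k)
    (hS : ∀ t ∈ Set.Ico j k, chain F j a t ∈ S t) (hS' : ∀ t ∈ Set.Ico j' k, chain F j' a' t ∈ S t)
    (h : chain F j a k = chain F j' a' k) : j = j' ∧ a = a' := by
  induction k generalizing j j' with
  | zero => exact ⟨by omega, h⟩
  | succ k ih =>
    rcases hj.lt_or_eq with hjk | rfl <;> rcases hj'.lt_or_eq with hjk' | rfl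
    · rw [chain_succ (Nat.le_of_lt_succ hjk), chain_succ (Nat.le_of_lt_succ hjk')] at h
      exact ih hb hb' (Nat.le_of_lt_succ hjk) (Nat.le_of_lt_succ hjk')
        (fun t ht => hS t ⟨ht.1, ht.2.trans k.lt_succ_self⟩)
        (fun t ht => hS' t ⟨ht.1, ht.2.trans k.lt_succ_self⟩)
        (hinj k (hS k ⟨Nat.le_of_lt_succ hjk, k.lt_succ_self⟩)
          (hS' k ⟨Nat.le_of_lt_succ hjk', k.lt_succ_self⟩) h)
    · exact absurd (h.trans chain_self) (chain_succ_ne_of_isBorn hmaps hb' (Nat.le_of_lt_succ hjk)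
        (hS k ⟨Nat.le_of_lt_succ hjk, k.lt_succ_self⟩))
    · exact absurd (h.symm.trans chain_self) (chain_succ_ne_of_isBorn hmaps hb
        (Nat.le_of_lt_succ hjk') (hS' k ⟨Nat.le_of_lt_succ hjk', k.lt_succ_self⟩))
    · exact ⟨rfl, by simpa only [chain_self] using h⟩

end Chain

noncomputable def tailSum (δ : ℕ → ℝ≥0∞) (k : ℕ) : ℝ≥0∞ := ∑' i, δ (i + k)

lemma tailSum_eq_add (δ : ℕ → ℝ≥0∞) (k : ℕ) : tailSum δ k = δ k + tailSum δ (k + 1) := by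
  rw [tailSum, tsum_eq_zero_add' ENNReal.summable, zero_add, tailSum]
  exact congrArg _ (tsum_congr fun i => by rw [add_right_comm, add_assoc])

lemma tailSum_antitone (δ : ℕ → ℝ≥0∞) : Antitone (tailSum δ) :=
  antitone_nat_of_succ_le fun k => (tailSum_eq_add δ k).symm ▸ le_add_self

lemma le_tailSum (δ : ℕ → ℝ≥0∞) (k : ℕ) : δ k ≤ tailSum δ k :=
  (tailSum_eq_add δ k).symm ▸ le_self_add

structure IsMatchingChain (v : ℕ → ℕ → Bar) (δ : ℕ → ℝ≥0∞) (S T : ℕ → Set ℕ)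
    (F : ℕ → ℕ → ℕ) : Prop where
  bijOn : ∀ k, Set.BijOn (F k) (S k) (T k)
  barDist_le : ∀ k, ∀ n ∈ S k, barDist (v k n) (v (k + 1) (F k n)) ≤ δ k
  barLength_le_of_notMem_source : ∀ k n, n ∉ S k → barLength (v k n) ≤ 2 * δ k
  barLength_le_of_notMem_target : ∀ k m, m ∉ T k → barLength (v (k + 1) m) ≤ 2 * δ k

lemma exists_isMatchingChain {v : ℕ → ℕ → Bar} {δ : ℕ → ℝ≥0∞}
    (hM : ∀ k, InfMatching (v k) (v (k + 1)) (δ k)) : ∃ S T F, IsMatchingChain v δ S T F := by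
  choose S T F hF h1 h2 h3 using fun k => (hM k).exists_bijOn
  exact ⟨S, T, F, hF, h1, h2, h3⟩

/-- One bar `L p` for each chain that is born at `p = (time, index)` and survives forever;
`Nat.pairEquiv` enumerates the pairs. -/
noncomputable def chainLimit (S T : ℕ → Set ℕ) (F : ℕ → ℕ → ℕ) (L : ℕ × ℕ → Bar) (i : ℕ) : Bar :=
  let p := Nat.pairEquiv.symm i
  if IsBorn T p.1 p.2 ∧ Survives S F p.1 p.2 then L p else (0, 0)

namespace IsMatchingChain

variable {v : ℕ → ℕ → Bar} {δ : ℕ → ℝ≥0∞} {S T : ℕ → Set ℕ} {F : ℕ → ℕ → ℕ}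

lemma barDist_chain_add_tailSum_le (hc : IsMatchingChain v δ S T F) {j k a : ℕ} (hjk : j ≤ k)
    (hS : ∀ t ∈ Set.Ico j k, chain F j a t ∈ S t) :
    barDist (v j a) (v k (chain F j a k)) + tailSum δ k ≤ tailSum δ j := by
  induction k, hjk using Nat.le_induction with
  | base => simp [chain_self, barDist_self]
  | succ k hjk ih =>
    have hk : chain F j a k ∈ S k := hS k ⟨hjk, k.lt_succ_self⟩
    calc barDist (v j a) (v (k + 1) (chain F j a (k + 1))) + tailSum δ (k + 1)
        ≤ barDist (v j a) (v k (chain F j a k)) + δ k + tailSum δ (k + 1) := by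
          rw [chain_succ hjk]
          gcongr
          exact (barDist_triangle _ (v k (chain F j a k)) _).trans
            (add_le_add le_rfl (hc.barDist_le k _ hk))
      _ = barDist (v j a) (v k (chain F j a k)) + tailSum δ k := by
          rw [add_assoc, ← tailSum_eq_add]
      _ ≤ tailSum δ j := ih fun t ht => hS t ⟨ht.1, ht.2.trans k.lt_succ_self⟩

lemma barLength_le_of_not_survives (hc : IsMatchingChain v δ S T F) {k a : ℕ}
    (h : ¬ Survives S F k a) : barLength (v k a) ≤ 2 * tailSum δ k := by
  obtain ⟨t, hkt, hexit, hS⟩ := exists_first_notMem_of_not_survives h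
  set d := barDist (v k a) (v t (chain F k a t))
  calc barLength (v k a) ≤ barLength (v t (chain F k a t)) + 2 * d := barLength_le_add _ _
    _ ≤ 2 * tailSum δ t + 2 * d := by
        gcongr
        exact (hc.barLength_le_of_notMem_source t _ hexit).trans (by gcongr; exact le_tailSum δ t)
    _ = 2 * (d + tailSum δ t) := by ring
    _ ≤ 2 * tailSum δ k := by gcongr; exact hc.barDist_chain_add_tailSum_le hkt hS

lemma barLength_le_of_isBorn (hc : IsMatchingChain v δ S T F) {j k a : ℕ} {L : Bar} (hk : k < j)
    (hb : IsBorn T j a) (hL : barDist (v j a) L ≤ tailSum δ j) :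
    barLength L ≤ 2 * tailSum δ k := by
  obtain ⟨t, rfl⟩ : ∃ t, j = t + 1 := ⟨j - 1, by omega⟩
  calc barLength L ≤ barLength (v (t + 1) a) + 2 * barDist L (v (t + 1) a) := barLength_le_add _ _
    _ ≤ 2 * δ t + 2 * tailSum δ (t + 1) := by
        rw [barDist_comm]
        gcongr
        exact hc.barLength_le_of_notMem_target t a (hb t rfl)
    _ = 2 * tailSum δ t := by rw [tailSum_eq_add δ t, mul_add]
    _ ≤ 2 * tailSum δ k := by gcongr; exact tailSum_antitone δ (Nat.le_of_lt_succ hk)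

lemma exists_limit_bar (hc : IsMatchingChain v δ S T F) (hv : ∀ k, ValidFam (v k))
    (hδ : ∑' k, δ k ≠ ⊤) {j a : ℕ} (h : Survives S F j a) :
    ∃ L : Bar, L.1 ≤ L.2 ∧ ∀ t, j ≤ t → barDist (v t (chain F j a t)) L ≤ tailSum δ t := by
  obtain ⟨L, hL, hdist⟩ := exists_bar_limit (x := fun i => v (i + j) (chain F j a (i + j)))
    (fun i => hv _ _) (fun i => δ (i + j))
    (ne_top_of_le_ne_top hδ (ENNReal.tsum_comp_le_tsum_of_injective (add_left_injective j) δ))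
    (fun i => by
      simp only [add_right_comm i 1 j, chain_succ (Nat.le_add_left j i)]
      exact hc.barDist_le _ _ (h _ (Nat.le_add_left j i)))
  refine ⟨L, hL, fun t hjt => ?_⟩
  obtain ⟨i, rfl⟩ := Nat.exists_eq_add_of_le' hjt
  exact (hdist i).trans_eq (tsum_congr fun m => congrArg δ (by ring))

lemma infMatching_chainLimit (hc : IsMatchingChain v δ S T F) (L : ℕ × ℕ → Bar)
    (hL : ∀ p : ℕ × ℕ, Survives S F p.1 p.2 →
      ∀ t, p.1 ≤ t → barDist (v t (chain F p.1 p.2 t)) (L p) ≤ tailSum δ t) (k : ℕ) :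
    InfMatching (chainLimit S T F L) (v k) (tailSum δ k) := by
  set e : ℕ ≃ ℕ × ℕ := Nat.pairEquiv.symm
  refine infMatching_of_injOn {i | (IsBorn T (e i).1 (e i).2 ∧ Survives S F (e i).1 (e i).2) ∧
      (e i).1 ≤ k} (fun i => chain F (e i).1 (e i).2 k) ?_ ?_ ?_ ?_
  · rintro i ⟨⟨hb, hs⟩, hk⟩ i' ⟨⟨hb', hs'⟩, hk'⟩ h
    obtain ⟨h1, h2⟩ := isBorn_chain_injective (fun t => (hc.bijOn t).mapsTo)
      (fun t => (hc.bijOn t).injOn) hb hb' hk hk' (fun t ht => hs t ht.1) (fun t ht => hs' t ht.1) h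
    exact e.injective (Prod.ext h1 h2)
  · rintro i ⟨hlive, hk⟩
    rw [chainLimit, if_pos hlive, barDist_comm]
    exact hL _ hlive.2 k hk
  · intro i hi
    rw [chainLimit]
    split_ifs with hlive
    · refine hc.barLength_le_of_isBorn (lt_of_not_ge fun hk => hi ⟨hlive, hk⟩) hlive.1 ?_
      simpa only [chain_self] using hL (e i) hlive.2 _ le_rfl
    · simp [barLength, erealDist_self]
  · intro n hn
    by_cases hs : Survives S F k n
    · obtain ⟨j, hj, b, hb, rfl, hS⟩ := exists_isBorn_chain_eq (fun t => (hc.bijOn t).surjOn) k n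
      exact absurd ⟨e.symm (j, b), by simpa using ⟨⟨hb, hs.of_chain hj hS⟩, hj⟩⟩ hn
    · exact hc.barLength_le_of_not_survives hs

theorem exists_limit (hc : IsMatchingChain v δ S T F) (hv : ∀ k, ValidFam (v k))
    (hδ : ∑' k, δ k ≠ ⊤) : ∃ f, ValidFam f ∧ ∀ k, InfMatching (v k) f (tailSum δ k) := by
  have hL : ∀ p : ℕ × ℕ, ∃ L : Bar, L.1 ≤ L.2 ∧ (Survives S F p.1 p.2 →
      ∀ t, p.1 ≤ t → barDist (v t (chain F p.1 p.2 t)) L ≤ tailSum δ t) := fun p => by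
    by_cases h : Survives S F p.1 p.2
    · obtain ⟨L, hL, hdist⟩ := hc.exists_limit_bar hv hδ h
      exact ⟨L, hL, fun _ => hdist⟩
    · exact ⟨(0, 0), le_rfl, fun h' => absurd h' h⟩
  choose L hLv hL using hL
  refine ⟨chainLimit S T F L, fun i => ?_, fun k => (hc.infMatching_chainLimit L hL k).symm⟩
  rw [chainLimit]
  split_ifs
  exacts [hLv _, le_rfl]

end IsMatchingChain

lemma exists_strictMono_infMatching {u : ℕ → ℕ → Bar}
    (hC : ∀ ε : ℝ≥0∞, 0 < ε → ∃ N, ∀ m n, N ≤ m → N ≤ n → dBotInf (u m) (u n) ≤ ε) :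
    ∃ φ : ℕ → ℕ, StrictMono φ ∧ ∀ k, InfMatching (u (φ k)) (u (φ (k + 1))) (2⁻¹ ^ k) := by
  have hlt : ∀ k : ℕ, (2⁻¹ : ℝ≥0∞) ^ (k + 1) < 2⁻¹ ^ k := fun k => by
    rw [pow_succ, ← div_eq_mul_inv]
    exact ENNReal.half_lt_self (pow_ne_zero _ (by norm_num)) (ENNReal.pow_ne_top (by norm_num))
  obtain ⟨φ, hφ, hφC⟩ := extraction_forall_of_eventually
    (P := fun k m => ∀ n, m ≤ n → dBotInf (u m) (u n) ≤ 2⁻¹ ^ (k + 1)) fun k => by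
      obtain ⟨N, hN⟩ := hC ((2⁻¹ : ℝ≥0∞) ^ (k + 1)) (ENNReal.pow_pos (by norm_num) (k + 1))
      exact eventually_atTop.2 ⟨N, fun m hm n hn => hN m n hm (hm.trans hn)⟩
  exact ⟨φ, hφ, fun k => .of_dBotInf_lt ((hφC k _ (hφ.monotone k.le_succ)).trans_lt (hlt k))⟩

theorem exists_limit_of_cauchy (u : ℕ → ℕ → Bar) (hu : ∀ n, ValidFam (u n) ∧ TameFam (u n))
    (hC : ∀ ε : ℝ≥0∞, 0 < ε → ∃ N, ∀ m n, N ≤ m → N ≤ n → dBotInf (u m) (u n) ≤ ε) :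
    ∃ f : ℕ → Bar, ValidFam f ∧ TameFam f ∧
      ∀ ε : ℝ≥0∞, 0 < ε → ∃ N, ∀ n, N ≤ n → dBotInf (u n) f ≤ ε := by
  obtain ⟨φ, hφ, hM⟩ := exists_strictMono_infMatching hC
  have hδ : ∑' k : ℕ, (2⁻¹ : ℝ≥0∞) ^ k ≠ ⊤ := by
    simp [ENNReal.tsum_geometric, ENNReal.one_sub_inv_two]
  obtain ⟨S, T, F, hc⟩ := exists_isMatchingChain hM
  obtain ⟨f, hfv, hf⟩ := hc.exists_limit (fun k => (hu _).1) hδ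
  have htail : Tendsto (tailSum fun k => 2⁻¹ ^ k) atTop (𝓝 0) := ENNReal.tendsto_sum_nat_add _ hδ
  refine ⟨f, hfv, TameFam.of_forall_infMatching fun η hη => ?_, fun ε hε => ?_⟩
  · obtain ⟨k, hk⟩ := (htail.eventually (gt_mem_nhds hη)).exists
    exact ⟨u (φ k), (hu _).2, ((hf k).mono hk.le).symm⟩
  · obtain ⟨N, hN⟩ := hC (ε / 2) (ENNReal.half_pos hε.ne')
    obtain ⟨k, hkN, hk⟩ := ((eventually_ge_atTop N).and
      (htail.eventually (gt_mem_nhds (ENNReal.half_pos hε.ne')))).exists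
    refine ⟨N, fun n hn => ?_⟩
    calc dBotInf (u n) f ≤ dBotInf (u n) (u (φ k)) + dBotInf (u (φ k)) f := dBotInf_triangle _ _ _
      _ ≤ ε / 2 + ε / 2 :=
          add_le_add (hN n _ hn (hkN.trans (hφ.id_le k))) (dBotInf_le ((hf k).mono hk.le))
      _ = ε := ENNReal.add_halves ε

/-- The space of infinite barcodes with the finiteness property, equipped with the
bottleneck distance, is a complete extended metric space in which the finite barcodes
form a dense subset. -/
theorem stmt6 :
    -- reflexivity
    (∀ f : ℕ → Bar, ValidFam f → TameFam f → dBotInf f f = 0) ∧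
    -- symmetry
    (∀ f g : ℕ → Bar, ValidFam f → ValidFam g → TameFam f → TameFam g →
      dBotInf f g = dBotInf g f) ∧
    -- triangle inequality
    (∀ f g h : ℕ → Bar, ValidFam f → ValidFam g → ValidFam h →
      TameFam f → TameFam g → TameFam h →
      dBotInf f h ≤ dBotInf f g + dBotInf g h) ∧
    -- separation: distance zero implies equality of barcodes
    (∀ f g : ℕ → Bar, ValidFam f → ValidFam g → TameFam f → TameFam g →
      dBotInf f g = 0 → EquivFam f g) ∧
    -- completeness: every Cauchy sequence of such barcodes converges to one of them
    (∀ u : ℕ → ℕ → Bar, (∀ n, ValidFam (u n) ∧ TameFam (u n)) →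
      (∀ ε : ℝ≥0∞, 0 < ε → ∃ N, ∀ m n, N ≤ m → N ≤ n → dBotInf (u m) (u n) ≤ ε) →
      ∃ f : ℕ → Bar, ValidFam f ∧ TameFam f ∧
        ∀ ε : ℝ≥0∞, 0 < ε → ∃ N, ∀ n, N ≤ n → dBotInf (u n) f ≤ ε) ∧
    -- density of the finite barcodes
    (∀ f : ℕ → Bar, ValidFam f → TameFam f → ∀ ε : ℝ≥0∞, 0 < ε →
      ∃ g : ℕ → Bar, ValidFam g ∧ FiniteFam g ∧ dBotInf f g ≤ ε) := by
  refine ⟨fun f _ _ => dBotInf_self f, fun f g _ _ _ _ => dBotInf_comm f g,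
    fun f g h _ _ _ _ _ _ => dBotInf_triangle f g h,
    fun f g _ _ hf hg h0 => equivFam_of_dBotInf_eq_zero hf hg h0, exists_limit_of_cauchy,
    fun f hv ht ε hε => ?_⟩
  obtain ⟨g, hgv, hgfin, M⟩ := ht.exists_finiteFam_infMatching hv hε
  exact ⟨g, hgv, hgfin, dBotInf_le M⟩
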